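/- arXiv:2601.16177 — 4 statements merged into one kernel-verified Lean document; each statement's English description precedes it below -/
import Mathlib

section
/- Let G be a maximal stabilizer group on N qubits and k ≥ 1. The stabilizer state |ψ_G⟩ has maximally mixed reduced state on every subset of k sites if and only if k < δ(G), where δ(G) is the minimum support size over nonidentity elements of G. -/
/-
Write ρ = |ψ⟩⟨ψ|. Since |G| = 2^N, the group average P = 2^{-N} ∑_{g ∈ G} g is a Hermitian
idempotent of trace 1 fixing ψ, so ρ = P; by trace-orthogonality of Pauli strings,
⟨ψ|σ_p|ψ⟩ = Tr(P σ_p) vanishes unless ±σ_p ∈ G, while it equals ±1 if ±σ_p ∈ G.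
Expanding ρ_A in the Pauli basis of the sites in A, and using Tr(ρ_A σ_q) = Tr(ρ (σ_q ⊗ I)),
ρ_A is maximally mixed iff ⟨ψ|σ_p|ψ⟩ = 0 for every nonidentity σ_p supported in A, i.e. iff
no nonidentity element of G is supported in A. Over all A with |A| = k ≤ N this says that
every nonidentity element of G has support larger than k.
-/

open Matrix Complex BigOperators
open scoped Classical

noncomputable section

/-- Single-qubit Pauli matrices: I, X, Y, Z. -/
def pauli1 : Fin 4 → Matrix (Fin 2) (Fin 2) ℂ
  | 0 => 1
  | 1 => !![0, 1; 1, 0]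
  | 2 => !![0, -Complex.I; Complex.I, 0]
  | 3 => !![1, 0; 0, -1]

/-- Operators on an N-qubit system with sites indexed by `V`. -/
abbrev QOp (V : Type*) := Matrix (V → Fin 2) (V → Fin 2) ℂ

/-- The prefactor-1 Pauli string with single-site labels `p`. -/
def pauliOp {V : Type*} [Fintype V] (p : V → Fin 4) : QOp V :=
  Matrix.of fun x y => ∏ i, pauli1 (p i) (x i) (y i)

/-- Support of a Pauli string: sites where the tensor factor is not the identity. -/
def psupp {V : Type*} [Fintype V] (p : V → Fin 4) : Finset V :=
  Finset.univ.filter fun i => p i ≠ 0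

/-- Allowed phases of Pauli group elements. -/
def isPhase (a : ℂ) : Prop := a = 1 ∨ a = -1 ∨ a = Complex.I ∨ a = -Complex.I

/-- A maximal stabilizer group on qubits indexed by `V`: an abelian set of
prefactor-`±1` Pauli strings, closed under multiplication, containing `I`,
not containing `-I`, of cardinality `2 ^ |V|`. -/
structure MaxStabilizer (V : Type*) [Fintype V] [DecidableEq V] where
  carrier : Finset (QOp V)
  mem_pauli : ∀ g ∈ carrier, ∃ (c : ℂ) (p : V → Fin 4), (c = 1 ∨ c = -1) ∧ g = c • pauliOp p
  one_mem : (1 : QOp V) ∈ carrier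
  mul_mem : ∀ g ∈ carrier, ∀ h ∈ carrier, g * h ∈ carrier
  mul_comm' : ∀ g ∈ carrier, ∀ h ∈ carrier, g * h = h * g
  neg_one_not_mem : (-1 : QOp V) ∉ carrier
  card_eq : carrier.card = 2 ^ Fintype.card V

/-- `ψ` is the stabilizer state of `G`: a normalized common `+1`-eigenvector of all
elements of `G`. -/
def IsStabState {V : Type*} [Fintype V] [DecidableEq V] (G : MaxStabilizer V)
    (ψ : (V → Fin 2) → ℂ) : Prop :=
  (∀ g ∈ G.carrier, Matrix.mulVec g ψ = ψ) ∧ ∑ x, starRingEnd ℂ (ψ x) * ψ x = 1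

/-- The projector `|ψ⟩⟨ψ|` onto a state `ψ`. -/
def projOf {V : Type*} (ψ : (V → Fin 2) → ℂ) : QOp V :=
  Matrix.vecMulVec ψ fun x => starRingEnd ℂ (ψ x)

/-- Reduced density matrix (partial trace over the complement of `A`). -/
def reduced {V : Type*} [Fintype V] [DecidableEq V] (ρ : QOp V) (A : Finset V) :
    Matrix ({i // i ∈ A} → Fin 2) ({i // i ∈ A} → Fin 2) ℂ :=
  Matrix.of fun a b => ∑ c : {i // i ∉ A} → Fin 2,
    ρ (fun i => if h : i ∈ A then a ⟨i, h⟩ else c ⟨i, h⟩)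
      (fun i => if h : i ∈ A then b ⟨i, h⟩ else c ⟨i, h⟩)

/-- `δ(G)`: minimum support size over nonidentity elements of `G`. -/
def sdelta {V : Type*} [Fintype V] [DecidableEq V] (G : MaxStabilizer V) : ℕ :=
  sInf {k | ∃ (c : ℂ) (p : V → Fin 4), (c = 1 ∨ c = -1) ∧ c • pauliOp p ∈ G.carrier ∧
    c • pauliOp p ≠ 1 ∧ (psupp p).card = k}

section PiTensor

variable {V n R : Type*} [Fintype V] [CommSemiring R]

def piTensor (M : V → Matrix n n R) : Matrix (V → n) (V → n) R :=
  of fun x y => ∏ i, M i (x i) (y i)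

theorem piTensor_apply (M : V → Matrix n n R) (x y : V → n) :
    piTensor M x y = ∏ i, M i (x i) (y i) := rfl

theorem piTensor_mul [DecidableEq V] [Fintype n] (M N : V → Matrix n n R) :
    piTensor M * piTensor N = piTensor (M * N) := by
  ext x y
  simp only [mul_apply, piTensor_apply, Pi.mul_apply, Fintype.prod_sum, Finset.prod_mul_distrib]

theorem trace_piTensor [DecidableEq V] [Fintype n] (M : V → Matrix n n R) :
    (piTensor M).trace = ∏ i, (M i).trace := by
  simp only [trace, diag_apply, piTensor_apply, Fintype.prod_sum]

theorem piTensor_one [DecidableEq V] [DecidableEq n] :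
    piTensor (fun _ : V => (1 : Matrix n n R)) = 1 := by
  ext x y
  simp only [piTensor_apply, one_apply, Fintype.prod_ite_zero, Finset.prod_const_one, funext_iff]

theorem conjTranspose_piTensor [StarRing R] (M : V → Matrix n n R) :
    (piTensor M)ᴴ = piTensor fun i => (M i)ᴴ := by
  ext x y
  simp only [conjTranspose_apply, piTensor_apply, star_prod]

end PiTensor

section Pauli

theorem conjTranspose_pauli1 (a : Fin 4) : (pauli1 a)ᴴ = pauli1 a := by
  fin_cases a <;> ext i j <;> fin_cases i <;> fin_cases j <;> simp [pauli1, conjTranspose_apply]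

theorem pauli1_mul_self (a : Fin 4) : pauli1 a * pauli1 a = 1 := by
  fin_cases a <;> ext i j <;> fin_cases i <;> fin_cases j <;>
    simp [pauli1, mul_apply, Fin.sum_univ_two, one_apply]

theorem trace_pauli1_mul (a b : Fin 4) :
    (pauli1 a * pauli1 b).trace = if a = b then 2 else 0 := by
  fin_cases a <;> fin_cases b <;> simp [pauli1, trace, Fin.sum_univ_two, one_apply] <;> norm_num

theorem sum_pauli1_apply_mul_apply (x y z w : Fin 2) :
    ∑ t, pauli1 t x y * pauli1 t z w =
      2 * ((1 : Matrix (Fin 2) (Fin 2) ℂ) x w * (1 : Matrix (Fin 2) (Fin 2) ℂ) y z) := by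
  fin_cases x <;> fin_cases y <;> fin_cases z <;> fin_cases w <;>
    simp [Fin.sum_univ_four, pauli1] <;> norm_num

variable {V : Type*} [Fintype V]

theorem psupp_subset_iff (A : Finset V) {p : V → Fin 4} : psupp p ⊆ A ↔ ∀ i ∉ A, p i = 0 := by
  simp only [psupp, Finset.subset_iff, Finset.mem_filter, Finset.mem_univ, true_and]
  exact forall_congr' fun i => not_imp_comm

theorem pauliOp_eq_piTensor (p : V → Fin 4) : pauliOp p = piTensor fun i => pauli1 (p i) := rfl

@[simp]
theorem pauliOp_zero [DecidableEq V] : pauliOp (0 : V → Fin 4) = 1 := piTensor_one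

theorem pauliOp_mul_self [DecidableEq V] (p : V → Fin 4) : pauliOp p * pauliOp p = 1 := by
  simp only [pauliOp_eq_piTensor, piTensor_mul, Pi.mul_def, pauli1_mul_self, piTensor_one]

theorem conjTranspose_pauliOp (p : V → Fin 4) : (pauliOp p)ᴴ = pauliOp p := by
  simp only [pauliOp_eq_piTensor, conjTranspose_piTensor, conjTranspose_pauli1]

theorem trace_pauliOp_mul_pauliOp [DecidableEq V] (p q : V → Fin 4) :
    (pauliOp p * pauliOp q).trace = if p = q then 2 ^ Fintype.card V else 0 := by
  simp only [pauliOp_eq_piTensor, piTensor_mul, trace_piTensor, Pi.mul_apply, trace_pauli1_mul,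
    Fintype.prod_ite_zero, Finset.prod_const, Finset.card_univ, funext_iff]

theorem trace_pauliOp [DecidableEq V] (p : V → Fin 4) :
    (pauliOp p).trace = if p = 0 then 2 ^ Fintype.card V else 0 := by
  simpa using trace_pauliOp_mul_pauliOp p 0

theorem smul_pauliOp_ne_one [DecidableEq V] {p : V → Fin 4} (hp : p ≠ 0) (c : ℂ) :
    c • pauliOp p ≠ 1 := by
  intro h
  have := congrArg trace h
  simp only [trace_smul, trace_pauliOp, hp, if_false, smul_zero, trace_one, Fintype.card_fun,
    Fintype.card_fin, Nat.cast_pow, Nat.cast_ofNat] at this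
  exact pow_ne_zero _ two_ne_zero this.symm

theorem sum_pauliOp_apply_mul_apply [DecidableEq V] (x y z w : V → Fin 2) :
    ∑ q, pauliOp q x y * pauliOp q z w =
      2 ^ Fintype.card V * ((1 : QOp V) x w * (1 : QOp V) y z) := by
  simp only [pauliOp_eq_piTensor, piTensor_apply, ← Finset.prod_mul_distrib]
  rw [← Fintype.prod_sum fun i t => pauli1 t (x i) (y i) * pauli1 t (z i) (w i)]
  simp only [sum_pauli1_apply_mul_apply, Finset.prod_mul_distrib, Finset.prod_const,
    Finset.card_univ]
  rw [← piTensor_apply, ← piTensor_apply, piTensor_one]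

theorem pauli_expansion [DecidableEq V] (M : QOp V) :
    (2 : ℂ) ^ Fintype.card V • M = ∑ q, (M * pauliOp q).trace • pauliOp q := by
  ext a b
  simp only [Matrix.smul_apply, Matrix.sum_apply, trace, diag_apply, mul_apply, smul_eq_mul,
    Finset.sum_mul]
  rw [Finset.sum_comm]
  conv_rhs => enter [2, x]; rw [Finset.sum_comm]
  simp only [mul_assoc, ← Finset.mul_sum, sum_pauliOp_apply_mul_apply]
  simp [one_apply, mul_comm]

end Pauli

section Reduced

variable {V : Type*} [DecidableEq V] (A : Finset V)

def glue {β : Type*} (a : A → β) (c : {i // i ∉ A} → β) : V → β :=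
  fun i => if h : i ∈ A then a ⟨i, h⟩ else c ⟨i, h⟩

theorem restrict_glue {β : Type*} (a : A → β) (c : {i // i ∉ A} → β) :
    A.restrict (glue A a c) = a :=
  funext fun i => dif_pos i.2

variable [Fintype V]

theorem sum_glue {β M : Type*} [Fintype β] [AddCommMonoid M] (f : (V → β) → M) :
    ∑ x, f x = ∑ a : A → β, ∑ c : {i // i ∉ A} → β, f (glue A a c) := by
  rw [← (Equiv.piEquivPiSubtypeProd (· ∈ A) fun _ => β).symm.sum_comp, Fintype.sum_prod_type]
  rfl

theorem reduced_apply (ρ : QOp V) (a b : A → Fin 2) :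
    reduced ρ A a b = ∑ c, ρ (glue A a c) (glue A b c) := rfl

theorem psupp_glue_zero_subset (q : A → Fin 4) : psupp (glue A q 0) ⊆ A :=
  (psupp_subset_iff A).2 fun _ hi => dif_neg hi

theorem pauliOp_glue_glue {p : V → Fin 4} (hp : psupp p ⊆ A) (a b : A → Fin 2)
    (c d : {i // i ∉ A} → Fin 2) :
    pauliOp p (glue A a c) (glue A b d) = pauliOp (A.restrict p) a b * (1 : QOp _) c d := by
  rw [← pauliOp_zero, pauliOp, of_apply, ← Finset.prod_mul_prod_compl A, ← Finset.prod_coe_sort A,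
    Finset.prod_subtype Aᶜ (p := (· ∉ A)) (by simp)]
  congr 1 <;> refine Finset.prod_congr rfl fun i _ => ?_
  · simp only [glue, dif_pos i.2, Finset.restrict]
  · simp only [glue, dif_neg i.2, (psupp_subset_iff A).1 hp i i.2, Pi.zero_apply]

theorem trace_reduced_mul_pauliOp (ρ : QOp V) {p : V → Fin 4} (hp : psupp p ⊆ A) :
    (reduced ρ A * pauliOp (A.restrict p)).trace = (ρ * pauliOp p).trace := by
  simp only [trace, diag_apply, mul_apply, reduced_apply, Finset.sum_mul]
  conv_rhs => rw [sum_glue A]; enter [2, a, 2, c]; rw [sum_glue A]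
  simp only [pauliOp_glue_glue A hp, one_apply, mul_ite, mul_one, mul_zero,
    Finset.sum_ite_eq', Finset.mem_univ, if_true]
  exact Finset.sum_congr rfl fun a _ => Finset.sum_comm

theorem reduced_eq_smul_one_iff {ρ : QOp V} (hρ : ρ.trace = 1) :
    reduced ρ A = ((2 : ℂ) ^ A.card)⁻¹ • 1 ↔
      ∀ p : V → Fin 4, p ≠ 0 → psupp p ⊆ A → (ρ * pauliOp p).trace = 0 := by
  have hred (q : A → Fin 4) :
      (reduced ρ A * pauliOp q).trace = (ρ * pauliOp (glue A q 0)).trace := by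
    rw [← trace_reduced_mul_pauliOp A ρ (psupp_glue_zero_subset A q), restrict_glue]
  constructor
  · intro h p hp hpA
    have hq : A.restrict p ≠ 0 := fun h0 => hp <| funext fun i => by
      by_cases hi : i ∈ A
      · exact congrFun h0 ⟨i, hi⟩
      · exact (psupp_subset_iff A).1 hpA i hi
    rw [← trace_reduced_mul_pauliOp A ρ hpA, h, smul_mul, one_mul, trace_smul, trace_pauliOp,
      if_neg hq, smul_zero]
  · intro h
    rw [eq_inv_smul_iff₀ (pow_ne_zero _ two_ne_zero), ← Fintype.card_coe A, pauli_expansion,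
      Finset.sum_eq_single 0]
    · have hglue : glue A (0 : A → Fin 4) 0 = 0 := funext fun i => by simp [glue]
      rw [hred, hglue, pauliOp_zero, pauliOp_zero, mul_one, hρ, one_smul]
    · intro q _ hq
      rw [hred, h _ _ (psupp_glue_zero_subset A q), zero_smul]
      intro h0
      exact hq (by rw [← restrict_glue A q 0, h0]; rfl)
    · simp

end Reduced

theorem Matrix.IsHermitian.eq_zero_of_isIdempotentElem_of_trace_eq_zero {m R : Type*}
    [Fintype m] [PartialOrder R] [NonUnitalRing R] [StarRing R] [StarOrderedRing R]
    [NoZeroDivisors R] {M : Matrix m m R} (hM : M.IsHermitian) (hMM : IsIdempotentElem M)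
    (htr : M.trace = 0) : M = 0 := by
  rw [← trace_conjTranspose_mul_self_eq_zero_iff, hM.eq, hMM.eq, htr]

section StateProjector

variable {V : Type*} {ψ : (V → Fin 2) → ℂ}

theorem projOf_eq_vecMulVec (ψ : (V → Fin 2) → ℂ) : projOf ψ = vecMulVec ψ (star ψ) := rfl

theorem isHermitian_projOf (ψ : (V → Fin 2) → ℂ) : (projOf ψ).IsHermitian := by
  simp [IsHermitian, projOf_eq_vecMulVec]

variable [Fintype V] [DecidableEq V]

theorem isIdempotentElem_projOf (hψ : star ψ ⬝ᵥ ψ = 1) : IsIdempotentElem (projOf ψ) := by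
  rw [IsIdempotentElem, projOf_eq_vecMulVec, vecMulVec_mul_vecMulVec, hψ, one_smul]

theorem trace_projOf_mul (M : QOp V) : (projOf ψ * M).trace = star ψ ⬝ᵥ (M *ᵥ ψ) := by
  rw [projOf_eq_vecMulVec, vecMulVec_mul, trace_vecMulVec, dotProduct_comm, dotProduct_mulVec]

theorem trace_projOf (hψ : star ψ ⬝ᵥ ψ = 1) : (projOf ψ).trace = 1 := by
  simpa [hψ] using trace_projOf_mul (ψ := ψ) 1

theorem mul_projOf_of_mulVec_eq {M : QOp V} (hM : M *ᵥ ψ = ψ) : M * projOf ψ = projOf ψ := by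
  rw [projOf_eq_vecMulVec, mul_vecMulVec, hM]

end StateProjector

namespace MaxStabilizer

variable {V : Type*} [Fintype V] [DecidableEq V] (G : MaxStabilizer V)

def MemUpToSign (p : V → Fin 4) : Prop :=
  ∃ c : ℂ, (c = 1 ∨ c = -1) ∧ c • pauliOp p ∈ G.carrier

theorem ne_zero_of_mem {c : ℂ} (hc : c = 1 ∨ c = -1) {p : V → Fin 4}
    (hmem : c • pauliOp p ∈ G.carrier) (hne : c • pauliOp p ≠ 1) : p ≠ 0 := by
  rintro rfl
  rcases hc with rfl | rfl
  · exact hne (by simp)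
  · exact G.neg_one_not_mem (by simpa using hmem)

theorem mul_self_of_mem {g : QOp V} (hg : g ∈ G.carrier) : g * g = 1 := by
  obtain ⟨c, p, hc, rfl⟩ := G.mem_pauli g hg
  rcases hc with rfl | rfl <;> simp [pauliOp_mul_self]

theorem isHermitian_of_mem {g : QOp V} (hg : g ∈ G.carrier) : g.IsHermitian := by
  obtain ⟨c, p, hc, rfl⟩ := G.mem_pauli g hg
  rcases hc with rfl | rfl <;> simp [IsHermitian, conjTranspose_pauliOp]

theorem trace_eq_zero_of_mem {g : QOp V} (hg : g ∈ G.carrier) (hg1 : g ≠ 1) : g.trace = 0 := by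
  obtain ⟨c, p, hc, rfl⟩ := G.mem_pauli g hg
  rw [trace_smul, trace_pauliOp, if_neg (G.ne_zero_of_mem hc hg hg1), smul_zero]

theorem mul_sum_carrier {g : QOp V} (hg : g ∈ G.carrier) :
    g * ∑ h ∈ G.carrier, h = ∑ h ∈ G.carrier, h := by
  rw [Finset.mul_sum]
  have hinv {h : QOp V} : g * (g * h) = h := by rw [← mul_assoc, G.mul_self_of_mem hg, one_mul]
  exact Finset.sum_nbij' (g * ·) (g * ·) (fun h hh => G.mul_mem g hg h hh)
    (fun h hh => G.mul_mem g hg h hh) (fun _ _ => hinv) (fun _ _ => hinv) fun _ _ => rfl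

def proj : QOp V := ((2 : ℂ) ^ Fintype.card V)⁻¹ • ∑ g ∈ G.carrier, g

theorem isHermitian_proj : G.proj.IsHermitian := by
  rw [IsHermitian, proj, conjTranspose_smul, conjTranspose_sum,
    Finset.sum_congr rfl fun g hg => (G.isHermitian_of_mem hg).eq]
  simp

theorem isIdempotentElem_proj : IsIdempotentElem G.proj := by
  have h2 : (2 : ℂ) ^ Fintype.card V ≠ 0 := pow_ne_zero _ two_ne_zero
  rw [IsIdempotentElem, proj, Matrix.smul_mul, Matrix.mul_smul, Finset.sum_mul,
    Finset.sum_congr rfl fun g hg => G.mul_sum_carrier hg, Finset.sum_const, G.card_eq, smul_smul,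
    ← Nat.cast_smul_eq_nsmul ℂ, smul_smul]
  push_cast
  field_simp

theorem trace_proj : G.proj.trace = 1 := by
  rw [proj, trace_smul, trace_sum,
    Finset.sum_eq_single_of_mem 1 G.one_mem fun g hg hne => G.trace_eq_zero_of_mem hg hne]
  simp

theorem proj_mulVec {ψ : (V → Fin 2) → ℂ} (hψ : IsStabState G ψ) : G.proj *ᵥ ψ = ψ := by
  rw [proj, smul_mulVec, sum_mulVec, Finset.sum_congr rfl hψ.1, Finset.sum_const, G.card_eq,
    ← Nat.cast_smul_eq_nsmul ℂ, smul_smul]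
  push_cast
  simp

open scoped ComplexOrder in
/-- `P - ρ` is a Hermitian idempotent of trace `0`, since `P ρ = ρ = ρ P` and both have trace `1`. -/
theorem projOf_eq_proj {ψ : (V → Fin 2) → ℂ} (hψ : IsStabState G ψ) : projOf ψ = G.proj := by
  have hPρ : G.proj * projOf ψ = projOf ψ := mul_projOf_of_mulVec_eq (G.proj_mulVec hψ)
  have hρP : projOf ψ * G.proj = projOf ψ := by
    simpa only [conjTranspose_mul, G.isHermitian_proj.eq, (isHermitian_projOf ψ).eq] using
      congrArg conjTranspose hPρ
  symm
  rw [← sub_eq_zero]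
  refine IsHermitian.eq_zero_of_isIdempotentElem_of_trace_eq_zero ?_ ?_ ?_
  · exact G.isHermitian_proj.sub (isHermitian_projOf ψ)
  · rw [IsIdempotentElem, sub_mul, mul_sub, mul_sub, G.isIdempotentElem_proj.eq, hPρ, hρP,
      (isIdempotentElem_projOf hψ.2).eq, sub_self, sub_zero]
  · rw [trace_sub, G.trace_proj, trace_projOf hψ.2, sub_self]

theorem trace_proj_mul_pauliOp_of_not_memUpToSign {p : V → Fin 4} (hp : ¬ G.MemUpToSign p) :
    (G.proj * pauliOp p).trace = 0 := by
  rw [proj, Matrix.smul_mul, trace_smul, Finset.sum_mul, trace_sum, Finset.sum_eq_zero, smul_zero]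
  intro g hg
  obtain ⟨c, q, hc, rfl⟩ := G.mem_pauli g hg
  have hqp : q ≠ p := by
    rintro rfl
    exact hp ⟨c, hc, hg⟩
  rw [Matrix.smul_mul, trace_smul, trace_pauliOp_mul_pauliOp, if_neg hqp, smul_zero]

theorem pauliOp_mulVec_of_isStabState {ψ : (V → Fin 2) → ℂ} (hψ : IsStabState G ψ) {c : ℂ}
    (hc : c = 1 ∨ c = -1) {p : V → Fin 4} (hmem : c • pauliOp p ∈ G.carrier) :
    pauliOp p *ᵥ ψ = c • ψ := by
  have hc2 : c * c = 1 := by rcases hc with rfl | rfl <;> norm_num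
  calc pauliOp p *ᵥ ψ = (c * c) • (pauliOp p *ᵥ ψ) := by rw [hc2, one_smul]
    _ = c • ((c • pauliOp p) *ᵥ ψ) := by rw [smul_mulVec, smul_smul]
    _ = c • ψ := by rw [hψ.1 _ hmem]

theorem trace_projOf_mul_pauliOp_eq_zero_iff {ψ : (V → Fin 2) → ℂ} (hψ : IsStabState G ψ)
    (p : V → Fin 4) : (projOf ψ * pauliOp p).trace = 0 ↔ ¬ G.MemUpToSign p := by
  refine ⟨?_, fun hp => G.projOf_eq_proj hψ ▸ G.trace_proj_mul_pauliOp_of_not_memUpToSign hp⟩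
  rintro h ⟨c, hc, hmem⟩
  have hn : star ψ ⬝ᵥ ψ = 1 := hψ.2
  rw [trace_projOf_mul, G.pauliOp_mulVec_of_isStabState hψ hc hmem, dotProduct_smul, hn,
    smul_eq_mul, mul_one] at h
  rcases hc with rfl | rfl <;> norm_num at h

theorem reduced_projOf_eq_smul_one_iff {ψ : (V → Fin 2) → ℂ} (hψ : IsStabState G ψ)
    (A : Finset V) :
    reduced (projOf ψ) A = ((2 : ℂ) ^ A.card)⁻¹ • 1 ↔
      ∀ p : V → Fin 4, p ≠ 0 → psupp p ⊆ A → ¬ G.MemUpToSign p := by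
  simp only [reduced_eq_smul_one_iff A (trace_projOf hψ.2),
    G.trace_projOf_mul_pauliOp_eq_zero_iff hψ]

theorem lt_sdelta_iff (hV : 0 < Fintype.card V) (k : ℕ) :
    k < sdelta G ↔ ∀ p, G.MemUpToSign p → p ≠ 0 → k < (psupp p).card := by
  refine ⟨fun hk p ⟨c, hc, hmem⟩ hp =>
    hk.trans_le (Nat.sInf_le ⟨c, p, hc, hmem, smul_pauliOp_ne_one hp c, rfl⟩), fun h => ?_⟩
  have hG : 1 < G.carrier.card := by
    rw [G.card_eq]
    exact Nat.one_lt_two_pow hV.ne'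
  obtain ⟨g, hg, hg1⟩ := Finset.exists_mem_ne hG 1
  obtain ⟨c, p, hc, rfl⟩ := G.mem_pauli g hg
  obtain ⟨c, p, hc, hmem, hne, hcard⟩ : sdelta G ∈ _ := Nat.sInf_mem ⟨_, c, p, hc, hg, hg1, rfl⟩
  rw [← hcard]
  exact h p ⟨c, hc, hmem⟩ (G.ne_zero_of_mem hc hmem hne)

end MaxStabilizer

/-- the stabilizer state has maximally mixed reduced state on every `k`-site
subset iff `k < δ(G)`. -/
theorem stmt4 (N k : ℕ) (G : MaxStabilizer (Fin N)) (ψ : (Fin N → Fin 2) → ℂ)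
    (hψ : IsStabState G ψ) (hk : 1 ≤ k) (hkN : k ≤ N) :
    (∀ A : Finset (Fin N), A.card = k →
      reduced (projOf ψ) A = ((2 : ℂ) ^ k)⁻¹ • 1) ↔ k < sdelta G := by
  rw [G.lt_sdelta_iff (by simpa using Nat.lt_of_lt_of_le hk hkN)]
  constructor
  · intro hmix p hpG hp
    by_contra! hle
    obtain ⟨A, hpA, rfl⟩ := Finset.exists_superset_card_eq hle (by simpa using hkN)
    exact (G.reduced_projOf_eq_smul_one_iff hψ A).1 (hmix A rfl) p hp hpA hpG
  · rintro h A rfl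
    exact (G.reduced_projOf_eq_smul_one_iff hψ A).2 fun p hp hpA hpG =>
      (h p hpG hp).not_ge (Finset.card_le_card hpA)
end
end

section
/- Let N ≥ 8 be even and G₁ the graph on Z/NZ with edges {{i,i+N/2−1},{i,i+N/2} : i}. For the contiguous subset A = {1,...,N/2−1} and every nonempty B ⊆ A, letting b₀ = min B, the vertex v = b₀ + N/2 − 1 lies outside A and is adjacent to exactly one element of B (namely b₀). -/
open scoped Classical

noncomputable section

/-- The graph `G₁` on `ZMod N` with edges `{i, i+N/2-1}` and `{i, i+N/2}`. -/
def G1 (N : ℕ) : SimpleGraph (ZMod N) :=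
  SimpleGraph.fromRel fun i j => j = i + ((N / 2 : ℕ) : ZMod N) - 1 ∨ j = i + ((N / 2 : ℕ) : ZMod N)

/-- The graph `G₂` on `ZMod N` with edges `{i, i+(N-1)/2}`. -/
def G2 (N : ℕ) : SimpleGraph (ZMod N) :=
  SimpleGraph.fromRel fun i j => j = i + (((N - 1) / 2 : ℕ) : ZMod N)

/-- The `N`-cycle on `ZMod N`, with edges `{i, i+1}`. -/
def CycZ (N : ℕ) : SimpleGraph (ZMod N) :=
  SimpleGraph.fromRel fun i j => j = i + 1

lemma cast_inj_aux {N a b : ℕ} (ha : a < N) (hb : b < N) (h : (a : ZMod N) = b) : a = b := by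
  have := congrArg ZMod.val h
  rwa [ZMod.val_cast_of_lt ha, ZMod.val_cast_of_lt hb] at this

/-- for `A = {1,…,N/2-1}` and nonempty `B ⊆ A` with `b₀ = min B`, the
vertex `v = b₀ + N/2 - 1` lies outside `A` and is adjacent (in `G₁`) to exactly one
element of `B`, namely `b₀`. -/
theorem stmt11 (N : ℕ) (hN : 8 ≤ N) (hEven : Even N)
    (B : Finset ℕ) (hB : B.Nonempty) (hBA : B ⊆ Finset.Icc 1 (N / 2 - 1)) :
    ((B.min' hB + N / 2 - 1 : ℕ) : ZMod N) ∉
      (Finset.Icc 1 (N / 2 - 1)).image (fun n : ℕ => (n : ZMod N)) ∧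
    ∀ b ∈ B, ((G1 N).Adj ((B.min' hB + N / 2 - 1 : ℕ) : ZMod N) (b : ZMod N) ↔
      b = B.min' hB) := by
  obtain ⟨m, hm⟩ := hEven
  have hm2 : N / 2 = m := by omega
  have hm4 : 4 ≤ m := by omega
  have hb₀B : B.min' hB ∈ B := B.min'_mem hB
  have hb₀ := Finset.mem_Icc.mp (hBA hb₀B)
  obtain ⟨c, hc⟩ : ∃ c, B.min' hB = c + 1 := ⟨B.min' hB - 1, by omega⟩
  have hkey : B.min' hB + N / 2 - 1 = c + m := by omega
  have hcm : c + 2 ≤ m := by omega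
  have hN0 : ((m : ZMod N) + m) = 0 := by
    have h0 : ((m + m : ℕ) : ZMod N) = 0 := by rw [← hm]; exact ZMod.natCast_self N
    push_cast at h0; exact h0
  have hMcast : ((N / 2 : ℕ) : ZMod N) = (m : ZMod N) := by rw [hm2]
  rw [hkey]
  constructor
  · intro hmem
    obtain ⟨n, hn, hne⟩ := Finset.mem_image.mp hmem
    rw [Finset.mem_Icc] at hn
    have h1 : n < N := by omega
    have h2 : c + m < N := by omega
    have := cast_inj_aux h1 h2 hne
    omega
  · intro b hb
    have hbI := Finset.mem_Icc.mp (hBA hb)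
    have hb₀b : B.min' hB ≤ b := B.min'_le b hb
    constructor
    · rintro hadj
      rw [G1, SimpleGraph.fromRel_adj, hMcast] at hadj
      obtain ⟨hne, (h | h) | (h | h)⟩ := hadj
      · -- ↑b = ↑(c+m) + ↑m - 1
        exfalso
        have h' : ((b + 1 : ℕ) : ZMod N) = ((c : ℕ) : ZMod N) := by
          push_cast at h ⊢
          linear_combination h + hN0
        have := cast_inj_aux (by omega : b + 1 < N) (by omega : c < N) h'
        omega
      · exfalso
        have h' : ((b : ℕ) : ZMod N) = ((c : ℕ) : ZMod N) := by
          push_cast at h ⊢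
          linear_combination h + hN0
        have := cast_inj_aux (by omega : b < N) (by omega : c < N) h'
        omega
      · -- ↑(c+m) = ↑b + ↑m - 1
        have h' : ((c + 1 : ℕ) : ZMod N) = ((b : ℕ) : ZMod N) := by
          push_cast at h ⊢
          linear_combination h
        have := cast_inj_aux (by omega : c + 1 < N) (by omega : b < N) h'
        omega
      · exfalso
        have h' : ((c : ℕ) : ZMod N) = ((b : ℕ) : ZMod N) := by
          push_cast at h ⊢
          linear_combination h
        have := cast_inj_aux (by omega : c < N) (by omega : b < N) h'
        omega
    · rintro rfl
      rw [G1, SimpleGraph.fromRel_adj, hMcast]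
      refine ⟨?_, Or.inr (Or.inl ?_)⟩
      · intro hne
        have := cast_inj_aux (by omega : c + m < N) (by omega : B.min' hB < N) hne
        omega
      · rw [hc]; push_cast; ring
end
end

section
/- Let N ≥ 5 be odd and G₂ the graph on Z/NZ with edges {{i, i+(N−1)/2}}. For every 2-element subset A ⊆ Z/NZ and every nonempty B ⊆ A, there exists a vertex v ∉ A adjacent to an odd number of elements of B. Hence the graph state of G₂ is in two-body MITE. -/
open scoped Classical

noncomputable section

section Aux

variable {N : ℕ} (hN : 5 ≤ N) (hOdd : Odd N)

/-- Half of `N-1`, as an element of `ZMod N`. -/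
def kk (N : ℕ) : ZMod N := (((N - 1) / 2 : ℕ) : ZMod N)

include hN in
lemma castNe (c : ℕ) (hc : 0 < c) (h4 : c ≤ 4) : ((c : ℕ) : ZMod N) ≠ 0 := by
  intro h
  have hd := (ZMod.natCast_eq_zero_iff c N).mp h
  have := Nat.le_of_dvd hc hd
  omega

include hN in
lemma one_ne' : (1 : ZMod N) ≠ 0 := by
  have := castNe hN 1 one_pos (by norm_num); exact_mod_cast this

include hN in
lemma two_ne' : (2 : ZMod N) ≠ 0 := by
  have := castNe hN 2 two_pos (by norm_num); exact_mod_cast this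

include hN in
lemma three_ne' : (3 : ZMod N) ≠ 0 := by
  have := castNe hN 3 three_pos (by norm_num); exact_mod_cast this

include hN hOdd in
lemma kk_add_kk : kk N + kk N = -1 := by
  obtain ⟨m, hm⟩ := hOdd
  have h1 : (N - 1) / 2 = m := by omega
  have h2 : ((N : ℕ) : ZMod N) = 0 := ZMod.natCast_self N
  have : ((m : ℕ) : ZMod N) + ((m : ℕ) : ZMod N) = ((N : ℕ) : ZMod N) - 1 := by
    rw [← Nat.cast_add]
    have : m + m = N - 1 := by omega
    rw [this]
    have : (N - 1 : ℕ) + 1 = N := by omega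
    have := congrArg (fun x : ℕ => (x : ZMod N)) this
    push_cast at this
    linear_combination this
  rw [kk, h1, this, h2]; ring

include hN hOdd in
lemma adj_iff (v b : ZMod N) :
    (G2 N).Adj v b ↔ v = b + kk N ∨ v = b + kk N + 1 := by
  have h2k := kk_add_kk hN hOdd
  have hk0 : kk N ≠ 0 := by
    intro h; rw [h] at h2k
    exact one_ne' hN (by linear_combination h2k)
  have hk1 : kk N + 1 ≠ 0 := by
    intro h
    exact one_ne' hN (by linear_combination h + h - h2k)
  have hadj : (G2 N).Adj v b ↔ v ≠ b ∧ (b = v + kk N ∨ v = b + kk N) := by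
    simp [G2, SimpleGraph.fromRel_adj, kk]
  rw [hadj]
  constructor
  · rintro ⟨hne, h | h⟩
    · right; rw [h]; linear_combination -h2k
    · left; exact h
  · rintro (h | h)
    · exact ⟨by rw [h]; intro hc; exact hk0 (by linear_combination hc), Or.inr h⟩
    · refine ⟨by rw [h]; intro hc; exact hk1 (by linear_combination hc), Or.inl ?_⟩
      rw [h]; linear_combination -h2k

lemma card_filter_pair {α : Type*} [DecidableEq α] (p : α → Prop) [DecidablePred p]
    {a b : α} (hab : a ≠ b) (hpa : p a) (hpb : ¬ p b) :
    (({a, b} : Finset α).filter p).card = 1 := by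
  rw [Finset.filter_insert, if_pos hpa, Finset.filter_singleton, if_neg hpb]
  simp

lemma card_filter_pair' {α : Type*} [DecidableEq α] (p : α → Prop) [DecidablePred p]
    {a b : α} (hab : a ≠ b) (hpa : ¬ p a) (hpb : p b) :
    (({a, b} : Finset α).filter p).card = 1 := by
  rw [Finset.filter_insert, if_neg hpa, Finset.filter_singleton, if_pos hpb]
  simp

end Aux

/-- for every 2-element subset `A` of `ZMod N` and nonempty `B ⊆ A`,
some vertex `v ∉ A` has an odd number of neighbors (in `G₂`) in `B`; hence the graph
state of `G₂` is in two-body MITE. -/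
theorem stmt14 (N : ℕ) (hN : 5 ≤ N) (hOdd : Odd N) (A : Finset (ZMod N))
    (hA : A.card = 2) (B : Finset (ZMod N)) (hBA : B ⊆ A) (hB : B.Nonempty) :
    ∃ v : ZMod N, v ∉ A ∧ Odd (B.filter fun b => (G2 N).Adj v b).card := by
  classical
  obtain ⟨a, b, hab, rfl⟩ := Finset.card_eq_two.mp hA
  set k := kk N with hk
  have h2k : k + k = -1 := kk_add_kk hN hOdd
  have hadj : ∀ v x : ZMod N, (G2 N).Adj v x ↔ v = x + k ∨ v = x + k + 1 :=
    adj_iff hN hOdd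
  have h1 := one_ne' hN
  have h2 := two_ne' hN
  have h3 := three_ne' hN
  have hk0 : k ≠ 0 := fun h => h1 (by linear_combination h2k - h - h)
  have hk1 : k ≠ 1 := fun h => h3 (by linear_combination h2k - h - h)
  have hkm1 : k ≠ -1 := fun h => h1 (by linear_combination h + h - h2k)
  -- helper for the singleton case
  have singleton_case : ∀ x : ZMod N, x ∈ ({a, b} : Finset (ZMod N)) →
      ∃ v : ZMod N, v ∉ ({a, b} : Finset (ZMod N)) ∧
        Odd (({x} : Finset (ZMod N)).filter fun y => (G2 N).Adj v y).card := by
    intro x hx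
    by_cases hv1 : x + k ∈ ({a, b} : Finset (ZMod N))
    · refine ⟨x + k + 1, ?_, ?_⟩
      · intro hv2
        -- then {a,b} = {x+k, x+k+1} ∋ x, contradiction
        simp only [Finset.mem_insert, Finset.mem_singleton] at hx hv1 hv2
        rcases hx with rfl | rfl <;> rcases hv1 with h' | h' <;>
          rcases hv2 with h'' | h'' <;>
          first
            | exact hk0 (by linear_combination h')
            | exact hkm1 (by linear_combination h'')
            | exact h1 (by linear_combination h'' - h')
      · rw [Finset.filter_singleton, if_pos ((hadj _ x).mpr (Or.inr rfl))]
        simp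
    · refine ⟨x + k, hv1, ?_⟩
      rw [Finset.filter_singleton, if_pos ((hadj _ x).mpr (Or.inl rfl))]
      simp
  by_cases ha : a ∈ B
  · by_cases hb : b ∈ B
    · -- B = {a, b}
      have hBeq : B = ({a, b} : Finset (ZMod N)) := by
        apply Finset.Subset.antisymm hBA
        intro x hx
        simp only [Finset.mem_insert, Finset.mem_singleton] at hx
        rcases hx with rfl | rfl <;> assumption
      subst hBeq
      by_cases hba1 : b = a + 1
      · -- v = a + k
        refine ⟨a + k, ?_, ?_⟩
        · simp only [Finset.mem_insert, Finset.mem_singleton]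
          push_neg
          constructor
          · intro h'; exact hk0 (by linear_combination h')
          · intro h'; exact h3 (by linear_combination h2k - 2 * h' - 2 * hba1)
        · rw [card_filter_pair _ hab ((hadj _ a).mpr (Or.inl rfl)) ?_]
          · simp
          · intro h'
            rcases (hadj _ b).mp h' with h'' | h''
            · exact hab (by linear_combination h'')
            · exact h2 (by linear_combination -h'' - hba1)
      · by_cases hab1 : a = b + 1
        · -- v = b + k
          refine ⟨b + k, ?_, ?_⟩
          · simp only [Finset.mem_insert, Finset.mem_singleton]
            push_neg
            constructor
            · intro h'; exact h3 (by linear_combination h2k - 2 * h' - 2 * hab1)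
            · intro h'; exact hk0 (by linear_combination h')
          · rw [card_filter_pair' _ hab ?_ ((hadj _ b).mpr (Or.inl rfl))]
            · simp
            · intro h'
              rcases (hadj _ a).mp h' with h'' | h''
              · exact hab (by linear_combination -h'')
              · exact hba1 (by linear_combination h'')
        · by_cases hbk : b = a + k
          · -- v = a + k + 1
            refine ⟨a + k + 1, ?_, ?_⟩
            · simp only [Finset.mem_insert, Finset.mem_singleton]
              push_neg
              constructor
              · intro h'; exact hkm1 (by linear_combination h')
              · intro h'; exact h1 (by linear_combination h' + hbk)
            · rw [card_filter_pair _ hab ((hadj _ a).mpr (Or.inr rfl)) ?_]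
              · simp
              · intro h'
                rcases (hadj _ b).mp h' with h'' | h''
                · exact hba1 (by linear_combination -h'')
                · exact hab (by linear_combination h'')
          · -- v = a + k
            refine ⟨a + k, ?_, ?_⟩
            · simp only [Finset.mem_insert, Finset.mem_singleton]
              push_neg
              constructor
              · intro h'; exact hk0 (by linear_combination h')
              · intro h'; exact hbk (by linear_combination -h')
            · rw [card_filter_pair _ hab ((hadj _ a).mpr (Or.inl rfl)) ?_]
              · simp
              · intro h'
                rcases (hadj _ b).mp h' with h'' | h''
                · exact hab (by linear_combination h'')
                · exact hab1 (by linear_combination h'')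
    · -- B = {a}
      have hBeq : B = ({a} : Finset (ZMod N)) := by
        apply Finset.Subset.antisymm
        · intro x hx
          have := hBA hx
          simp only [Finset.mem_insert, Finset.mem_singleton] at this ⊢
          rcases this with rfl | rfl
          · rfl
          · exact absurd hx hb
        · simpa using ha
      subst hBeq
      exact singleton_case a (by simp)
  · by_cases hb : b ∈ B
    · have hBeq : B = ({b} : Finset (ZMod N)) := by
        apply Finset.Subset.antisymm
        · intro x hx
          have := hBA hx
          simp only [Finset.mem_insert, Finset.mem_singleton] at this ⊢
          rcases this with rfl | rfl
          · exact absurd hx ha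
          · rfl
        · simpa using hb
      subst hBeq
      exact singleton_case b (by simp)
    · obtain ⟨x, hx⟩ := hB
      have := hBA hx
      simp only [Finset.mem_insert, Finset.mem_singleton] at this
      rcases this with rfl | rfl
      · exact absurd hx ha
      · exact absurd hx hb
end
end

section
/- Let N ≥ 5 be odd and G₂ the graph on Z/NZ with edges {{i, i+(N−1)/2}}. For the contiguous subset A = {1,...,(N−1)/2} and every nonempty B ⊆ A, the vertex v = (min B) + (N−1)/2 lies outside A and is adjacent to exactly one element of B. -/
open scoped Classical

noncomputable section

lemma castinj {N x y : ℕ} (hx : x < N) (hy : y < N)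
    (h : (x : ZMod N) = (y : ZMod N)) : x = y := by
  have := congrArg ZMod.val h
  rwa [ZMod.val_natCast_of_lt hx, ZMod.val_natCast_of_lt hy] at this

/-- for `A = {1,…,(N-1)/2}` and nonempty `B ⊆ A`, the vertex
`v = (min B) + (N-1)/2` lies outside `A` and is adjacent (in `G₂`) to exactly one
element of `B`, namely `min B`. -/
theorem stmt15 (N : ℕ) (hN : 5 ≤ N) (hOdd : Odd N)
    (B : Finset ℕ) (hB : B.Nonempty) (hBA : B ⊆ Finset.Icc 1 ((N - 1) / 2)) :
    ((B.min' hB + (N - 1) / 2 : ℕ) : ZMod N) ∉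
      (Finset.Icc 1 ((N - 1) / 2)).image (fun n : ℕ => (n : ZMod N)) ∧
    ∀ b ∈ B, ((G2 N).Adj ((B.min' hB + (N - 1) / 2 : ℕ) : ZMod N) (b : ZMod N) ↔
      b = B.min' hB) := by
  obtain ⟨k, hk⟩ := hOdd
  set m := (N - 1) / 2 with hm
  have hmk : m = k := by omega
  have hNm : N = 2 * m + 1 := by omega
  set a := B.min' hB with ha
  have haB : a ∈ B := B.min'_mem hB
  have haA := hBA haB
  rw [Finset.mem_Icc] at haA
  have hNcast : ((2 * m + 1 : ℕ) : ZMod N) = 0 := by rw [← hNm]; exact ZMod.natCast_self N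
  push_cast at hNcast
  constructor
  · intro h
    rw [Finset.mem_image] at h
    obtain ⟨n, hn, hcast⟩ := h
    rw [Finset.mem_Icc] at hn
    have := castinj (by omega) (by omega) hcast
    omega
  · intro b hbB
    have hbA := hBA hbB
    rw [Finset.mem_Icc] at hbA
    have hab : a ≤ b := B.min'_le b hbB
    rw [G2, SimpleGraph.fromRel_adj]
    constructor
    · rintro ⟨hne, h | h⟩
      · exfalso
        have h1 : ((b + 1 : ℕ) : ZMod N) = ((a : ℕ) : ZMod N) := by
          push_cast at h ⊢
          linear_combination h + hNcast
        have := castinj (by omega) (by omega) h1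
        omega
      · have h1 : ((a : ℕ) : ZMod N) = ((b : ℕ) : ZMod N) := by
          push_cast at h ⊢
          linear_combination h
        have := castinj (by omega) (by omega) h1
        omega
    · rintro rfl
      refine ⟨?_, Or.inr (by push_cast; ring)⟩
      intro h
      have h1 : ((a + m : ℕ) : ZMod N) = ((a : ℕ) : ZMod N) := by push_cast at h ⊢; exact h
      have := castinj (by omega) (by omega) h1
      omega
end
end
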